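/- arXiv:2401.04037 — 5 statements merged into one kernel-verified Lean document; each statement's English description precedes it below -/
import Mathlib

section
/- Let B : ℕ → ℕ → ℂ be a function satisfying the GL(3) Hecke relations: B(1,1)=1, B(m₁m₁', m₂m₂') = B(m₁,m₂)·B(m₁',m₂') whenever gcd(m₁m₂, m₁'m₂')=1, and B(n,1)·B(m₁,m₂) = ∑_{d₀d₁d₂ = n, d₁∣m₁, d₂∣m₂} B(m₁d₀/d₁, m₂d₁/d₂), together with the dual relation B(1,n)·B(m₁,m₂) = ∑_{d₀d₁d₂ = n, d₁∣m₁, d₂∣m₂} B(m₁d₂/d₁, m₂d₀/d₂). Then for all positive integers m, n: B(m,n) = ∑_{d ∣ gcd(m,n)} μ(d) · B(m/d, 1) · B(1, n/d). -/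
open scoped BigOperators

/-- The GL(3) Hecke multiplication sum:
`∑_{d₀d₁d₂ = n, d₁ ∣ m₁, d₂ ∣ m₂} B (m₁ d₀ / d₁) (m₂ d₁ / d₂)`. -/
noncomputable def heckeSum (B : ℕ → ℕ → ℂ) (n m₁ m₂ : ℕ) : ℂ :=
  ∑ d₁ ∈ n.divisors, ∑ d₂ ∈ (n / d₁).divisors,
    if d₁ ∣ m₁ ∧ d₂ ∣ m₂ then B (m₁ * (n / d₁ / d₂) / d₁) (m₂ * d₁ / d₂) else 0

/-- The dual GL(3) Hecke multiplication sum: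
`∑_{d₀d₁d₂ = n, d₁ ∣ m₁, d₂ ∣ m₂} B (m₁ d₂ / d₁) (m₂ d₀ / d₂)`. -/
noncomputable def heckeSumDual (B : ℕ → ℕ → ℂ) (n m₁ m₂ : ℕ) : ℂ :=
  ∑ d₁ ∈ n.divisors, ∑ d₂ ∈ (n / d₁).divisors,
    if d₁ ∣ m₁ ∧ d₂ ∣ m₂ then B (m₁ * d₂ / d₁) (m₂ * (n / d₁ / d₂) / d₂) else 0

private lemma cof_aux {d k g : ℕ} (hd : d ∣ k) (hk : k ∣ g) (hg : 0 < g) :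
    (g / k) * d = g / (k / d) := by
  obtain ⟨e, rfl⟩ := hd
  obtain ⟨c, rfl⟩ := hk
  have hd0 : 0 < d := Nat.pos_of_ne_zero (by rintro rfl; simp at hg)
  have he0 : 0 < e := Nat.pos_of_ne_zero (by rintro rfl; simp at hg)
  rw [Nat.mul_div_cancel_left e hd0]
  rw [show d * e * c / (d * e) = c from Nat.mul_div_cancel_left c (Nat.mul_pos hd0 he0)]
  rw [show d * e * c / e = d * c by
    rw [mul_comm d e, mul_assoc]; exact Nat.mul_div_cancel_left _ he0]
  ring

theorem moebius_inversion_of_hecke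
    (B : ℕ → ℕ → ℂ)
    (h11 : B 1 1 = 1)
    (hmul : ∀ m₁ m₂ m₁' m₂' : ℕ, 0 < m₁ → 0 < m₂ → 0 < m₁' → 0 < m₂' →
      Nat.Coprime (m₁ * m₂) (m₁' * m₂') →
      B (m₁ * m₁') (m₂ * m₂') = B m₁ m₂ * B m₁' m₂')
    (hhecke : ∀ n m₁ m₂ : ℕ, 0 < n → 0 < m₁ → 0 < m₂ →
      B n 1 * B m₁ m₂ = heckeSum B n m₁ m₂)
    (hdual : ∀ n m₁ m₂ : ℕ, 0 < n → 0 < m₁ → 0 < m₂ →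
      B 1 n * B m₁ m₂ = heckeSumDual B n m₁ m₂) :
    ∀ m n : ℕ, 0 < m → 0 < n →
      B m n = ∑ d ∈ (Nat.gcd m n).divisors,
        ((ArithmeticFunction.moebius d : ℤ) : ℂ) * B (m / d) 1 * B 1 (n / d) := by
  have key : ∀ M N : ℕ, 0 < M → 0 < N →
      B M 1 * B 1 N = ∑ d ∈ (Nat.gcd M N).divisors, B (M / d) (N / d) := by
    intro M N hM hN
    have hdiv : (Nat.gcd M N).divisors = M.divisors.filter (· ∣ N) := by
      ext d
      simp only [Nat.mem_divisors, Finset.mem_filter]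
      constructor
      · rintro ⟨hd, _⟩
        exact ⟨⟨hd.trans (Nat.gcd_dvd_left _ _), hM.ne'⟩, hd.trans (Nat.gcd_dvd_right _ _)⟩
      · rintro ⟨⟨h1, _⟩, h2⟩
        exact ⟨Nat.dvd_gcd h1 h2, Nat.gcd_ne_zero_left hM.ne'⟩
    rw [hhecke M 1 N hM one_pos hN]
    unfold heckeSum
    rw [Finset.sum_eq_single_of_mem 1 (Nat.one_mem_divisors.2 hM.ne')]
    · rw [hdiv, Finset.sum_filter]
      simp
    · intro b _ hb1
      have : ¬ b ∣ 1 := fun h => hb1 (Nat.dvd_one.mp h)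
      simp [this]
  intro m n hm hn
  set g := Nat.gcd m n with hg
  have hg0 : 0 < g := Nat.gcd_pos_of_pos_left n hm
  have hgm : g ∣ m := Nat.gcd_dvd_left m n
  have hgn : g ∣ n := Nat.gcd_dvd_right m n
  have main := (ArithmeticFunction.sum_eq_iff_sum_mul_moebius_eq_on
    {k | k ∣ g} (fun a b hab hb => hab.trans hb)
    (f := fun k => B (m / (g / k)) (n / (g / k)))
    (g := fun k => B (m / (g / k)) 1 * B 1 (n / (g / k)))).mp ?_ g hg0 (dvd_refl g)
  · rw [Nat.sum_divisorsAntidiagonal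
      (f := fun x y => ((ArithmeticFunction.moebius x : ℤ) : ℂ)
        * (B (m / (g / y)) 1 * B 1 (n / (g / y))))] at main
    rw [Nat.div_self hg0, Nat.div_one, Nat.div_one] at main
    rw [← main]
    apply Finset.sum_congr rfl
    intro d hd
    have hdg : d ∣ g := Nat.dvd_of_mem_divisors hd
    rw [Nat.div_div_self hdg hg0.ne', mul_assoc]
  · -- hypothesis of Möbius inversion
    intro k hk0 hkg
    have hkg : k ∣ g := hkg
    have hcof : g / k ∣ g := Nat.div_dvd_of_dvd hkg
    have hcm : g / k ∣ m := hcof.trans hgm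
    have hcn : g / k ∣ n := hcof.trans hgn
    have hM : 0 < m / (g / k) := Nat.div_pos (Nat.le_of_dvd hm hcm)
      (Nat.div_pos (Nat.le_of_dvd hg0 hkg) hk0)
    have hN : 0 < n / (g / k) := Nat.div_pos (Nat.le_of_dvd hn hcn)
      (Nat.div_pos (Nat.le_of_dvd hg0 hkg) hk0)
    have hgcd : Nat.gcd (m / (g / k)) (n / (g / k)) = k := by
      rw [Nat.gcd_div hcm hcn, ← hg, Nat.div_div_self hkg hg0.ne']
    rw [key _ _ hM hN, hgcd,
      ← Nat.sum_div_divisors k (fun i => B (m / (g / i)) (n / (g / i)))]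
    apply Finset.sum_congr rfl
    intro d hd
    have hdk : d ∣ k := Nat.dvd_of_mem_divisors hd
    rw [Nat.div_div_eq_div_mul, Nat.div_div_eq_div_mul, cof_aux hdk hkg hg0]
end

section
/- Let B : ℕ → ℕ → ℂ satisfy the GL(3) Hecke relations (multiplicativity in coprime arguments, B(1,1)=1, and B(n,1)·B(m₁,m₂) = ∑_{d₀d₁d₂=n, d₁∣m₁, d₂∣m₂} B(m₁d₀/d₁, m₂d₁/d₂), plus the dual relation for B(1,n)·B(m₁,m₂)). Then for all positive integers m, n: B(mn, 1) = ∑_{abc = n, b ∣ c, c ∣ m} μ(b)·μ(c)·B(m/c, c/b)·B(a, 1). -/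
open scoped BigOperators

open Finset in
private lemma sum_moebius_div' (C : ℕ) :
    ∑ c ∈ C.divisors, ((ArithmeticFunction.moebius c : ℤ) : ℂ) = if C = 1 then 1 else 0 := by
  have h := congrArg (fun f : ArithmeticFunction ℤ => f C) ArithmeticFunction.moebius_mul_coe_zeta
  simp only [ArithmeticFunction.mul_apply, ArithmeticFunction.one_apply,
    ArithmeticFunction.natCoe_apply, ArithmeticFunction.zeta_apply, Nat.cast_ite,
    Nat.cast_zero, Nat.cast_one] at h
  have h2 : ∑ d ∈ C.divisors, (ArithmeticFunction.moebius d : ℤ) = if C = 1 then 1 else 0 := by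
    rw [← h]
    rw [Nat.sum_divisorsAntidiagonal (fun x y => (ArithmeticFunction.moebius x : ℤ) * (if y = 0 then (0:ℤ) else 1))]
    refine Finset.sum_congr rfl fun p hp => ?_
    have h0 : C / p ≠ 0 := by
      rw [Nat.mem_divisors] at hp
      have := Nat.div_pos (Nat.le_of_dvd (Nat.pos_of_ne_zero hp.2) hp.1) (Nat.pos_of_ne_zero (by rintro rfl; exact hp.2 (Nat.eq_zero_of_zero_dvd hp.1)))
      omega
    simp [h0]
  calc ∑ c ∈ C.divisors, ((ArithmeticFunction.moebius c : ℤ) : ℂ)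
      = ((∑ d ∈ C.divisors, (ArithmeticFunction.moebius d : ℤ) : ℤ) : ℂ) := by push_cast; rfl
    _ = _ := by rw [h2]; split <;> simp

open Finset in
private lemma hm_swap2 (N : ℕ) (g : ℕ → ℕ → ℂ) :
    ∑ x ∈ N.divisors, ∑ y ∈ (N / x).divisors, g x y
      = ∑ y ∈ N.divisors, ∑ x ∈ (N / y).divisors, g x y := by
  rw [Finset.sum_sigma', Finset.sum_sigma']
  refine Finset.sum_nbij' (fun p => ⟨p.2, p.1⟩) (fun p => ⟨p.2, p.1⟩) ?_ ?_ ?_ ?_ ?_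
  case refine_3 => rintro ⟨x, y⟩ _; rfl
  case refine_4 => rintro ⟨x, y⟩ _; rfl
  case refine_5 => rintro ⟨x, y⟩ _; rfl
  all_goals {
    rintro ⟨x, y⟩ hp
    simp only [Finset.mem_sigma, Nat.mem_divisors] at hp ⊢
    obtain ⟨⟨hxN, hN⟩, hyNx, hNx0⟩ := hp
    have hxy : x * y ∣ N := by
      have := Nat.mul_dvd_mul_left x hyNx
      rwa [Nat.mul_div_cancel' hxN] at this
    have hyN : y ∣ N := dvd_trans (dvd_mul_left y x) hxy
    have hy0 : 0 < y := Nat.pos_of_ne_zero (fun h => hNx0 (Nat.eq_zero_of_zero_dvd (h ▸ hyNx)) )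
    refine ⟨⟨hyN, hN⟩, ?_, ?_⟩
    · rw [Nat.dvd_div_iff_mul_dvd hyN]
      rwa [mul_comm] at hxy
    · have := Nat.div_pos (Nat.le_of_dvd (Nat.pos_of_ne_zero hN) hyN) hy0
      omega }

open Finset in
private lemma hm_merge2 (N : ℕ) (g : ℕ → ℕ → ℂ) :
    ∑ x ∈ N.divisors, ∑ y ∈ (N / x).divisors, g x y
      = ∑ C ∈ N.divisors, ∑ y ∈ C.divisors, g (C / y) y := by
  rw [Finset.sum_sigma', Finset.sum_sigma']
  refine Finset.sum_nbij' (fun p => ⟨p.1 * p.2, p.2⟩) (fun p => ⟨p.1 / p.2, p.2⟩) ?_ ?_ ?_ ?_ ?_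
  · rintro ⟨x, y⟩ hp
    simp only [Finset.mem_sigma, Nat.mem_divisors] at hp ⊢
    obtain ⟨⟨hxN, hN⟩, hyNx, hNx0⟩ := hp
    have hxy : x * y ∣ N := by
      have := Nat.mul_dvd_mul_left x hyNx
      rwa [Nat.mul_div_cancel' hxN] at this
    have hy0 : x * y ≠ 0 := fun h => hN (by simpa [h] using hxy)
    exact ⟨⟨hxy, hN⟩, dvd_mul_left y x, hy0⟩
  · rintro ⟨C, y⟩ hp
    simp only [Finset.mem_sigma, Nat.mem_divisors] at hp ⊢
    obtain ⟨⟨hCN, hN⟩, hyC, hC0⟩ := hp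
    have hy0 : 0 < y := Nat.pos_of_ne_zero (fun h => hC0 (Nat.eq_zero_of_zero_dvd (h ▸ hyC)))
    have hCy : C / y ∣ N := dvd_trans (Nat.div_dvd_of_dvd hyC) hCN
    refine ⟨⟨hCy, hN⟩, ?_, ?_⟩
    · rw [Nat.dvd_div_iff_mul_dvd hCy, Nat.div_mul_cancel hyC]; exact hCN
    · have hCypos : 0 < C / y := Nat.div_pos (Nat.le_of_dvd (Nat.pos_of_ne_zero hC0) hyC) hy0
      have := Nat.div_pos (Nat.le_of_dvd (Nat.pos_of_ne_zero hN) hCy) hCypos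
      omega
  · rintro ⟨x, y⟩ hp
    simp only [Finset.mem_sigma, Nat.mem_divisors] at hp
    have hy : 0 < y := Nat.pos_of_ne_zero (fun h => hp.2.2 (Nat.eq_zero_of_zero_dvd (h ▸ hp.2.1)))
    exact congrArg (fun t => (⟨t, y⟩ : (_ : ℕ) × ℕ)) (Nat.mul_div_cancel x hy)
  · rintro ⟨C, y⟩ hp
    simp only [Finset.mem_sigma, Nat.mem_divisors] at hp
    exact congrArg (fun t => (⟨t, y⟩ : (_ : ℕ) × ℕ)) (Nat.div_mul_cancel hp.2.1)
  · rintro ⟨x, y⟩ hp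
    simp only [Finset.mem_sigma, Nat.mem_divisors] at hp
    have hy : 0 < y := Nat.pos_of_ne_zero (fun h => hp.2.2 (Nat.eq_zero_of_zero_dvd (h ▸ hp.2.1)))
    simp [Nat.mul_div_cancel x hy]

open Finset in
private lemma hm_reindex4 (n : ℕ) (f : ℕ → ℕ → ℕ → ℕ → ℂ) :
    (∑ d₁ ∈ n.divisors, ∑ d₂ ∈ (n / d₁).divisors, ∑ c ∈ (n / d₁ / d₂).divisors,
        ∑ b ∈ (n / d₁ / d₂ / c).divisors, f d₁ d₂ c b)
      = ∑ C ∈ n.divisors, ∑ E ∈ (n / C).divisors, ∑ b ∈ E.divisors, ∑ c ∈ C.divisors,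
          f (C / c) (E / b) c b := by
  have step1 : ∀ d₁, (∑ d₂ ∈ (n / d₁).divisors, ∑ c ∈ (n / d₁ / d₂).divisors,
        ∑ b ∈ (n / d₁ / d₂ / c).divisors, f d₁ d₂ c b)
      = ∑ c ∈ (n / d₁).divisors, ∑ d₂ ∈ (n / d₁ / c).divisors,
        ∑ b ∈ (n / d₁ / d₂ / c).divisors, f d₁ d₂ c b := by
    intro d₁
    exact hm_swap2 (n / d₁) (fun x y => ∑ b ∈ (n / d₁ / x / y).divisors, f d₁ x y b)
  simp only [step1]
  have e1 : ∀ d₁ c : ℕ, n / d₁ / c = n / (d₁ * c) := fun d₁ c => Nat.div_div_eq_div_mul n d₁ c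
  have step2 : (∑ d₁ ∈ n.divisors, ∑ c ∈ (n / d₁).divisors, ∑ d₂ ∈ (n / (d₁ * c)).divisors,
        ∑ b ∈ (n / d₁ / d₂ / c).divisors, f d₁ d₂ c b)
      = ∑ C ∈ n.divisors, ∑ c ∈ C.divisors, ∑ d₂ ∈ (n / ((C / c) * c)).divisors,
        ∑ b ∈ (n / (C / c) / d₂ / c).divisors, f (C / c) d₂ c b :=
    hm_merge2 n (fun u v => ∑ d₂ ∈ (n / (u * v)).divisors,
        ∑ b ∈ (n / u / d₂ / v).divisors, f u d₂ v b)
  calc (∑ d₁ ∈ n.divisors, ∑ c ∈ (n / d₁).divisors, ∑ d₂ ∈ (n / d₁ / c).divisors,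
        ∑ b ∈ (n / d₁ / d₂ / c).divisors, f d₁ d₂ c b)
      = ∑ d₁ ∈ n.divisors, ∑ c ∈ (n / d₁).divisors, ∑ d₂ ∈ (n / (d₁ * c)).divisors,
        ∑ b ∈ (n / d₁ / d₂ / c).divisors, f d₁ d₂ c b := by
          refine Finset.sum_congr rfl fun d₁ _ => Finset.sum_congr rfl fun c _ => ?_
          rw [e1]
    _ = ∑ C ∈ n.divisors, ∑ c ∈ C.divisors, ∑ d₂ ∈ (n / ((C / c) * c)).divisors,
        ∑ b ∈ (n / (C / c) / d₂ / c).divisors, f (C / c) d₂ c b := step2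
    _ = ∑ C ∈ n.divisors, ∑ c ∈ C.divisors, ∑ d₂ ∈ (n / C).divisors,
        ∑ b ∈ (n / C / d₂).divisors, f (C / c) d₂ c b := by
          refine Finset.sum_congr rfl fun C hC => Finset.sum_congr rfl fun c hc => ?_
          have hcC : c ∣ C := (Nat.mem_divisors.mp hc).1
          have hCc : C / c * c = C := Nat.div_mul_cancel hcC
          rw [hCc]
          refine Finset.sum_congr rfl fun d₂ _ => ?_
          have h3 : n / (C / c) / d₂ / c = n / C / d₂ := by
            rw [Nat.div_div_eq_div_mul, Nat.div_div_eq_div_mul, Nat.div_div_eq_div_mul,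
              show C / c * (d₂ * c) = C / c * c * d₂ by ring, hCc]
          rw [h3]
    _ = ∑ C ∈ n.divisors, ∑ d₂ ∈ (n / C).divisors, ∑ b ∈ (n / C / d₂).divisors,
        ∑ c ∈ C.divisors, f (C / c) d₂ c b := by
          refine Finset.sum_congr rfl fun C _ => ?_
          rw [Finset.sum_comm]
          exact Finset.sum_congr rfl fun d₂ _ => Finset.sum_comm
    _ = ∑ C ∈ n.divisors, ∑ E ∈ (n / C).divisors, ∑ b ∈ E.divisors,
        ∑ c ∈ C.divisors, f (C / c) (E / b) c b := by
          refine Finset.sum_congr rfl fun C _ => ?_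
          exact hm_merge2 (n / C) (fun x y => ∑ c ∈ C.divisors, f (C / c) x c y)

noncomputable def hmTsum (B : ℕ → ℕ → ℂ) (m₁ m₂ n : ℕ) : ℂ :=
  ∑ c ∈ n.divisors, ∑ b ∈ (n / c).divisors,
    if b ∣ c * m₂ ∧ c ∣ m₁ then
      ((ArithmeticFunction.moebius b : ℤ) : ℂ) * ((ArithmeticFunction.moebius c : ℤ) : ℂ) *
        B (m₁ / c) (c * m₂ / b) * B (n / c / b) 1
    else 0

open Finset in
private lemma hm_star (B : ℕ → ℕ → ℂ) (n m₁ m₂ : ℕ) (hn : n ≠ 0) :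
    (∑ d₁ ∈ n.divisors, ∑ d₂ ∈ (n / d₁).divisors,
      if d₁ ∣ m₁ ∧ d₂ ∣ m₂ then hmTsum B (m₁ / d₁) (m₂ * d₁ / d₂) (n / d₁ / d₂) else 0)
    = B m₁ m₂ * B n 1 := by
  have hre := hm_reindex4 n (fun d₁ d₂ c b =>
    if d₁ ∣ m₁ ∧ d₂ ∣ m₂ then
      (if b ∣ c * (m₂ * d₁ / d₂) ∧ c ∣ m₁ / d₁ then
        ((ArithmeticFunction.moebius b : ℤ) : ℂ) * ((ArithmeticFunction.moebius c : ℤ) : ℂ) *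
          B (m₁ / d₁ / c) (c * (m₂ * d₁ / d₂) / b) * B (n / d₁ / d₂ / c / b) 1
      else 0)
    else 0)
  have hL : (∑ d₁ ∈ n.divisors, ∑ d₂ ∈ (n / d₁).divisors,
      if d₁ ∣ m₁ ∧ d₂ ∣ m₂ then hmTsum B (m₁ / d₁) (m₂ * d₁ / d₂) (n / d₁ / d₂) else 0)
      = ∑ d₁ ∈ n.divisors, ∑ d₂ ∈ (n / d₁).divisors, ∑ c ∈ (n / d₁ / d₂).divisors,
          ∑ b ∈ (n / d₁ / d₂ / c).divisors,
          (if d₁ ∣ m₁ ∧ d₂ ∣ m₂ then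
            (if b ∣ c * (m₂ * d₁ / d₂) ∧ c ∣ m₁ / d₁ then
              ((ArithmeticFunction.moebius b : ℤ) : ℂ) * ((ArithmeticFunction.moebius c : ℤ) : ℂ) *
                B (m₁ / d₁ / c) (c * (m₂ * d₁ / d₂) / b) * B (n / d₁ / d₂ / c / b) 1
            else 0)
          else 0) := by
    refine Finset.sum_congr rfl fun d₁ _ => Finset.sum_congr rfl fun d₂ _ => ?_
    by_cases hP : d₁ ∣ m₁ ∧ d₂ ∣ m₂
    · rw [if_pos hP]
      unfold hmTsum
      exact Finset.sum_congr rfl fun c _ => Finset.sum_congr rfl fun b _ => by rw [if_pos hP]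
    · rw [if_neg hP]
      symm
      refine Finset.sum_eq_zero fun c _ => Finset.sum_eq_zero fun b _ => ?_
      rw [if_neg hP]
  rw [hL, hre]
  have hCstep : ∀ C ∈ n.divisors, ∀ E ∈ (n / C).divisors, ∀ b ∈ E.divisors,
      (∑ c ∈ C.divisors,
        (if C / c ∣ m₁ ∧ E / b ∣ m₂ then
          (if b ∣ c * (m₂ * (C / c) / (E / b)) ∧ c ∣ m₁ / (C / c) then
            ((ArithmeticFunction.moebius b : ℤ) : ℂ) * ((ArithmeticFunction.moebius c : ℤ) : ℂ) *
              B (m₁ / (C / c) / c) (c * (m₂ * (C / c) / (E / b)) / b) * B (n / (C / c) / (E / b) / c / b) 1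
          else 0)
        else 0))
      = (if C = 1 then (1:ℂ) else 0) *
          (if C ∣ m₁ ∧ E / b ∣ m₂ ∧ b ∣ C * (m₂ / (E / b)) then
            ((ArithmeticFunction.moebius b : ℤ) : ℂ) * B (m₁ / C) (C * (m₂ / (E / b)) / b) * B (n / C / E) 1
          else 0) := by
    intro C hC E hE b hb
    obtain ⟨hbE, hE0⟩ := Nat.mem_divisors.mp hb
    have hterm : ∀ c ∈ C.divisors,
        (if C / c ∣ m₁ ∧ E / b ∣ m₂ then
          (if b ∣ c * (m₂ * (C / c) / (E / b)) ∧ c ∣ m₁ / (C / c) then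
            ((ArithmeticFunction.moebius b : ℤ) : ℂ) * ((ArithmeticFunction.moebius c : ℤ) : ℂ) *
              B (m₁ / (C / c) / c) (c * (m₂ * (C / c) / (E / b)) / b) * B (n / (C / c) / (E / b) / c / b) 1
          else 0)
        else 0)
        = ((ArithmeticFunction.moebius c : ℤ) : ℂ) *
          (if C ∣ m₁ ∧ E / b ∣ m₂ ∧ b ∣ C * (m₂ / (E / b)) then
            ((ArithmeticFunction.moebius b : ℤ) : ℂ) * B (m₁ / C) (C * (m₂ / (E / b)) / b) * B (n / C / E) 1
          else 0) := by
      intro c hc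
      obtain ⟨hcC, hC0⟩ := Nat.mem_divisors.mp hc
      have hCc : C / c * c = C := Nat.div_mul_cancel hcC
      have hcCc : c * (C / c) = C := Nat.mul_div_cancel' hcC
      have hEb : E / b * b = E := Nat.div_mul_cancel hbE
      by_cases hQ : C ∣ m₁ ∧ E / b ∣ m₂ ∧ b ∣ C * (m₂ / (E / b))
      · obtain ⟨hQ1, hQ2, hQ3⟩ := hQ
        have h2 : m₂ * (C / c) / (E / b) = m₂ / (E / b) * (C / c) := by
          rw [mul_comm m₂ (C / c), Nat.mul_div_assoc (C / c) hQ2, mul_comm]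
        have h3 : c * (m₂ * (C / c) / (E / b)) = C * (m₂ / (E / b)) := by
          rw [h2, show c * (m₂ / (E / b) * (C / c)) = m₂ / (E / b) * (c * (C / c)) by ring,
            hcCc, mul_comm]
        have hc1 : C / c ∣ m₁ := dvd_trans (Nat.div_dvd_of_dvd hcC) hQ1
        have hc2 : c ∣ m₁ / (C / c) := by
          rw [Nat.dvd_div_iff_mul_dvd hc1, hCc]; exact hQ1
        have hc3 : b ∣ c * (m₂ * (C / c) / (E / b)) := by rw [h3]; exact hQ3
        rw [if_pos ⟨hc1, hQ2⟩, if_pos ⟨hc3, hc2⟩, if_pos ⟨hQ1, hQ2, hQ3⟩]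
        have v1 : m₁ / (C / c) / c = m₁ / C := by rw [Nat.div_div_eq_div_mul, hCc]
        have v3 : n / (C / c) / (E / b) / c / b = n / C / E := by
          rw [Nat.div_div_eq_div_mul, Nat.div_div_eq_div_mul, Nat.div_div_eq_div_mul,
            show C / c * (E / b * (c * b)) = C / c * c * (E / b * b) by ring, hCc, hEb,
            ← Nat.div_div_eq_div_mul]
        rw [v1, v3, h3]
        ring
      · rw [if_neg hQ, mul_zero]
        by_cases h1 : C / c ∣ m₁ ∧ E / b ∣ m₂
        · rw [if_pos h1]
          by_cases h2 : b ∣ c * (m₂ * (C / c) / (E / b)) ∧ c ∣ m₁ / (C / c)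
          · exfalso
            apply hQ
            have hQ1 : C ∣ m₁ := by
              have h22 := h2.2
              rw [Nat.dvd_div_iff_mul_dvd h1.1, hCc] at h22
              exact h22
            refine ⟨hQ1, h1.2, ?_⟩
            have h2' : m₂ * (C / c) / (E / b) = m₂ / (E / b) * (C / c) := by
              rw [mul_comm m₂ (C / c), Nat.mul_div_assoc (C / c) h1.2, mul_comm]
            have h3 : c * (m₂ * (C / c) / (E / b)) = C * (m₂ / (E / b)) := by
              rw [h2', show c * (m₂ / (E / b) * (C / c)) = m₂ / (E / b) * (c * (C / c)) by ring,
                hcCc, mul_comm]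
            rw [← h3]; exact h2.1
          · rw [if_neg h2]
        · rw [if_neg h1]
    rw [Finset.sum_congr rfl hterm, ← Finset.sum_mul, sum_moebius_div' C]
  rw [Finset.sum_congr rfl (fun C hC => Finset.sum_congr rfl (fun E hE =>
    Finset.sum_congr rfl (fun b hb => hCstep C hC E hE b hb)))]
  have pull : ∀ C ∈ n.divisors,
      (∑ E ∈ (n / C).divisors, ∑ b ∈ E.divisors,
        (if C = 1 then (1:ℂ) else 0) *
          (if C ∣ m₁ ∧ E / b ∣ m₂ ∧ b ∣ C * (m₂ / (E / b)) then
            ((ArithmeticFunction.moebius b : ℤ) : ℂ) * B (m₁ / C) (C * (m₂ / (E / b)) / b) * B (n / C / E) 1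
          else 0))
      = (if C = 1 then (1:ℂ) else 0) *
        ∑ E ∈ (n / C).divisors, ∑ b ∈ E.divisors,
          (if C ∣ m₁ ∧ E / b ∣ m₂ ∧ b ∣ C * (m₂ / (E / b)) then
            ((ArithmeticFunction.moebius b : ℤ) : ℂ) * B (m₁ / C) (C * (m₂ / (E / b)) / b) * B (n / C / E) 1
          else 0) := by
    intro C _
    rw [Finset.mul_sum]
    exact Finset.sum_congr rfl fun E _ => by rw [Finset.mul_sum]
  rw [Finset.sum_congr rfl pull]
  simp only [ite_mul, one_mul, zero_mul]
  rw [Finset.sum_ite_eq' n.divisors 1]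
  rw [if_pos (Nat.one_mem_divisors.mpr hn)]
  simp only [Nat.div_one, one_mul, one_dvd, true_and]
  have hEterm : ∀ E ∈ n.divisors, ∀ b ∈ E.divisors,
      (if E / b ∣ m₂ ∧ b ∣ m₂ / (E / b) then
        ((ArithmeticFunction.moebius b : ℤ) : ℂ) * B m₁ (m₂ / (E / b) / b) * B (n / E) 1
      else 0)
      = ((ArithmeticFunction.moebius b : ℤ) : ℂ) *
        (if E ∣ m₂ then B m₁ (m₂ / E) * B (n / E) 1 else 0) := by
    intro E hE b hb
    obtain ⟨hbE, hE0⟩ := Nat.mem_divisors.mp hb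
    have hEb : E / b * b = E := Nat.div_mul_cancel hbE
    by_cases hEm : E ∣ m₂
    · have hh1 : E / b ∣ m₂ := dvd_trans (Nat.div_dvd_of_dvd hbE) hEm
      have hh2 : b ∣ m₂ / (E / b) := by rw [Nat.dvd_div_iff_mul_dvd hh1, hEb]; exact hEm
      rw [if_pos ⟨hh1, hh2⟩, if_pos hEm,
        show m₂ / (E / b) / b = m₂ / E by rw [Nat.div_div_eq_div_mul, hEb]]
      ring
    · have hne : ¬(E / b ∣ m₂ ∧ b ∣ m₂ / (E / b)) := by
        rintro ⟨u1, u2⟩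
        rw [Nat.dvd_div_iff_mul_dvd u1, hEb] at u2
        exact hEm u2
      rw [if_neg hne, if_neg hEm, mul_zero]
  rw [Finset.sum_congr rfl (fun E hE => Finset.sum_congr rfl (fun b hb => hEterm E hE b hb))]
  rw [Finset.sum_congr rfl (fun E hE => by
    rw [← Finset.sum_mul, sum_moebius_div' E] :
    ∀ E ∈ n.divisors, (∑ b ∈ E.divisors, ((ArithmeticFunction.moebius b : ℤ) : ℂ) *
      (if E ∣ m₂ then B m₁ (m₂ / E) * B (n / E) 1 else 0))
      = (if E = 1 then (1:ℂ) else 0) * (if E ∣ m₂ then B m₁ (m₂ / E) * B (n / E) 1 else 0))]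
  simp only [ite_mul, one_mul, zero_mul]
  rw [Finset.sum_ite_eq' n.divisors 1]
  rw [if_pos (Nat.one_mem_divisors.mpr hn)]
  simp

open Finset in
private lemma hm_main (B : ℕ → ℕ → ℂ)
    (hhecke : ∀ n m₁ m₂ : ℕ, 0 < n → 0 < m₁ → 0 < m₂ →
      B n 1 * B m₁ m₂ = heckeSum B n m₁ m₂) :
    ∀ n : ℕ, 0 < n → ∀ m₁ m₂ : ℕ, 0 < m₁ → 0 < m₂ → B (m₁ * n) m₂ = hmTsum B m₁ m₂ n := by
  intro n
  induction n using Nat.strong_induction_on with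
  | _ n IH =>
    intro hn m₁ m₂ hm₁ hm₂
    have hstar := hm_star B n m₁ m₂ hn.ne'
    have hhe := hhecke n m₁ m₂ hn hm₁ hm₂
    have hdiff : heckeSum B n m₁ m₂
        - (∑ d₁ ∈ n.divisors, ∑ d₂ ∈ (n / d₁).divisors,
            if d₁ ∣ m₁ ∧ d₂ ∣ m₂ then hmTsum B (m₁ / d₁) (m₂ * d₁ / d₂) (n / d₁ / d₂) else 0)
        = B (m₁ * n) m₂ - hmTsum B m₁ m₂ n := by
      unfold heckeSum
      rw [← Finset.sum_sub_distrib]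
      have key : ∀ d₁ ∈ n.divisors, ∀ d₂ ∈ (n / d₁).divisors,
          ((if d₁ ∣ m₁ ∧ d₂ ∣ m₂ then B (m₁ * (n / d₁ / d₂) / d₁) (m₂ * d₁ / d₂) else 0)
            - (if d₁ ∣ m₁ ∧ d₂ ∣ m₂ then hmTsum B (m₁ / d₁) (m₂ * d₁ / d₂) (n / d₁ / d₂) else 0))
          = if d₁ = 1 ∧ d₂ = 1 then B (m₁ * n) m₂ - hmTsum B m₁ m₂ n else 0 := by
        intro d₁ hd₁ d₂ hd₂
        obtain ⟨hd₁n, hn0⟩ := Nat.mem_divisors.mp hd₁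
        obtain ⟨hd₂n, hnd₁0⟩ := Nat.mem_divisors.mp hd₂
        have hd₁pos : 0 < d₁ := Nat.pos_of_ne_zero (fun h => hn0 (Nat.eq_zero_of_zero_dvd (h ▸ hd₁n)))
        have hd₂pos : 0 < d₂ := Nat.pos_of_ne_zero (fun h => hnd₁0 (Nat.eq_zero_of_zero_dvd (h ▸ hd₂n)))
        by_cases hP : d₁ ∣ m₁ ∧ d₂ ∣ m₂
        · by_cases h11 : d₁ = 1 ∧ d₂ = 1
          · obtain ⟨rfl, rfl⟩ := h11
            rw [if_pos hP, if_pos hP, if_pos ⟨rfl, rfl⟩]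
            simp
          · rw [if_pos hP, if_pos hP, if_neg h11, sub_eq_zero]
            have hdd : d₁ * d₂ ∣ n := by
              have := Nat.mul_dvd_mul_left d₁ hd₂n
              rwa [Nat.mul_div_cancel' hd₁n] at this
            have hN : n / d₁ / d₂ = n / (d₁ * d₂) := Nat.div_div_eq_div_mul n d₁ d₂
            have hNpos : 0 < n / d₁ / d₂ := by
              rw [hN]
              exact Nat.div_pos (Nat.le_of_dvd hn hdd) (Nat.mul_pos hd₁pos hd₂pos)
            have hNlt : n / d₁ / d₂ < n := by
              rw [hN]
              apply Nat.div_lt_self hn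
              rcases Nat.eq_or_lt_of_le hd₁pos with h1 | h1
              · rcases Nat.eq_or_lt_of_le hd₂pos with h2 | h2
                · exact absurd ⟨h1.symm, h2.symm⟩ h11
                · calc 1 < d₂ := h2
                    _ = 1 * d₂ := (one_mul d₂).symm
                    _ ≤ d₁ * d₂ := Nat.mul_le_mul_right d₂ hd₁pos
              · calc 1 < d₁ := h1
                  _ = d₁ * 1 := (mul_one d₁).symm
                  _ ≤ d₁ * d₂ := Nat.mul_le_mul_left d₁ hd₂pos
            have harg : m₁ * (n / d₁ / d₂) / d₁ = m₁ / d₁ * (n / d₁ / d₂) := by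
              rw [mul_comm m₁ (n / d₁ / d₂), Nat.mul_div_assoc (n / d₁ / d₂) hP.1, mul_comm]
            rw [harg]
            exact IH (n / d₁ / d₂) hNlt hNpos (m₁ / d₁) (m₂ * d₁ / d₂)
              (Nat.div_pos (Nat.le_of_dvd hm₁ hP.1) hd₁pos)
              (Nat.div_pos (Nat.le_of_dvd (Nat.mul_pos hm₂ hd₁pos)
                (dvd_trans hP.2 (dvd_mul_right m₂ d₁))) hd₂pos)
        · rw [if_neg hP, if_neg hP, sub_self,
            if_neg (by rintro ⟨rfl, rfl⟩; exact hP ⟨one_dvd _, one_dvd _⟩)]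
      calc ∑ d₁ ∈ n.divisors, ((∑ d₂ ∈ (n / d₁).divisors,
              (if d₁ ∣ m₁ ∧ d₂ ∣ m₂ then B (m₁ * (n / d₁ / d₂) / d₁) (m₂ * d₁ / d₂) else 0))
            - ∑ d₂ ∈ (n / d₁).divisors,
              (if d₁ ∣ m₁ ∧ d₂ ∣ m₂ then hmTsum B (m₁ / d₁) (m₂ * d₁ / d₂) (n / d₁ / d₂) else 0))
          = ∑ d₁ ∈ n.divisors, ∑ d₂ ∈ (n / d₁).divisors,
              (if d₁ = 1 ∧ d₂ = 1 then B (m₁ * n) m₂ - hmTsum B m₁ m₂ n else 0) := by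
            refine Finset.sum_congr rfl fun d₁ hd₁ => ?_
            rw [← Finset.sum_sub_distrib]
            exact Finset.sum_congr rfl fun d₂ hd₂ => key d₁ hd₁ d₂ hd₂
        _ = B (m₁ * n) m₂ - hmTsum B m₁ m₂ n := by
            have inner : ∀ d₁ ∈ n.divisors,
                (∑ d₂ ∈ (n / d₁).divisors,
                  if d₁ = 1 ∧ d₂ = 1 then B (m₁ * n) m₂ - hmTsum B m₁ m₂ n else 0)
                = if d₁ = 1 then B (m₁ * n) m₂ - hmTsum B m₁ m₂ n else 0 := by
              intro d₁ hd₁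
              obtain ⟨hd₁n, hn0⟩ := Nat.mem_divisors.mp hd₁
              have hd₁pos : 0 < d₁ :=
                Nat.pos_of_ne_zero (fun h => hn0 (Nat.eq_zero_of_zero_dvd (h ▸ hd₁n)))
              have h1mem : 1 ∈ (n / d₁).divisors := Nat.one_mem_divisors.mpr (by
                have := Nat.div_pos (Nat.le_of_dvd (Nat.pos_of_ne_zero hn0) hd₁n) hd₁pos
                omega)
              rw [Finset.sum_congr rfl (fun d₂ _ =>
                show (if d₁ = 1 ∧ d₂ = 1 then B (m₁ * n) m₂ - hmTsum B m₁ m₂ n else 0)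
                    = if d₂ = 1 then (if d₁ = 1 then B (m₁ * n) m₂ - hmTsum B m₁ m₂ n else 0) else 0 by
                  by_cases h₂ : d₂ = 1 <;> by_cases h₁ : d₁ = 1 <;> simp [h₁, h₂])]
              rw [Finset.sum_ite_eq' ((n / d₁).divisors) 1, if_pos h1mem]
            rw [Finset.sum_congr rfl inner, Finset.sum_ite_eq' n.divisors 1,
              if_pos (Nat.one_mem_divisors.mpr hn.ne')]
    have : B (m₁ * n) m₂ - hmTsum B m₁ m₂ n = 0 := by
      rw [← hdiff, ← hhe, hstar]
      ring
    exact sub_eq_zero.mp this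

theorem hecke_mob2
    (B : ℕ → ℕ → ℂ)
    (h11 : B 1 1 = 1)
    (hmul : ∀ m₁ m₂ m₁' m₂' : ℕ, 0 < m₁ → 0 < m₂ → 0 < m₁' → 0 < m₂' →
      Nat.Coprime (m₁ * m₂) (m₁' * m₂') →
      B (m₁ * m₁') (m₂ * m₂') = B m₁ m₂ * B m₁' m₂')
    (hhecke : ∀ n m₁ m₂ : ℕ, 0 < n → 0 < m₁ → 0 < m₂ →
      B n 1 * B m₁ m₂ = heckeSum B n m₁ m₂)
    (hdual : ∀ n m₁ m₂ : ℕ, 0 < n → 0 < m₁ → 0 < m₂ →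
      B 1 n * B m₁ m₂ = heckeSumDual B n m₁ m₂) :
    ∀ m n : ℕ, 0 < m → 0 < n →
      B (m * n) 1 = ∑ c ∈ n.divisors, ∑ b ∈ (n / c).divisors,
        if b ∣ c ∧ c ∣ m then
          ((ArithmeticFunction.moebius b : ℤ) : ℂ) * ((ArithmeticFunction.moebius c : ℤ) : ℂ) *
            B (m / c) (c / b) * B (n / c / b) 1
        else 0 := by
  intro m n hm hn
  have h := hm_main B hhecke n hn m 1 hm one_pos
  rw [h]
  unfold hmTsum
  refine Finset.sum_congr rfl fun c _ => Finset.sum_congr rfl fun b _ => ?_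
  simp only [mul_one]
end

section
/- Let B : ℕ → ℕ → ℂ satisfy the GL(3) Hecke relations (multiplicativity in coprime arguments, B(1,1)=1, B(n,1)·B(m₁,m₂) = ∑_{d₀d₁d₂=n, d₁∣m₁, d₂∣m₂} B(m₁d₀/d₁, m₂d₁/d₂), and the dual relation). Then for all positive integers n₁, n₂, m: B(n₁n₂, m) = ∑_{abc = n₁, b ∣ mc, c ∣ n₂} μ(b)·μ(c)·B(n₂/c, mc/b)·B(a, 1). -/
open scoped BigOperators

/-! The Hecke relation says that `∑_{d₀d₁d₂ = n₁, d₁ ∣ n₂, d₂ ∣ m} B (d₀ n₂ / d₁) (m d₁ / d₂)`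
equals `B n₁ 1 * B n₂ m`. Its left side is the composite of two divisor-sum operators in `n₁`,
one moving a divisor of `n₂` over to `m` and one dividing `m` by a divisor, both with weight `ζ`.
Such operators compose by Dirichlet convolution of their weights, so each is inverted by the
same operator with weight `μ`; inverting both expresses `B (n₁ n₂) m` through the products
`B n₁' 1 * B n₂' m'`. -/

open Finset
open scoped ArithmeticFunction.zeta ArithmeticFunction.Moebius

theorem Nat.sum_divisorsAntidiagonal_assoc {M : Type*} [AddCommMonoid M] (n : ℕ)
    (f : ℕ → ℕ → ℕ → M) :
    ∑ p ∈ n.divisorsAntidiagonal, ∑ q ∈ p.2.divisorsAntidiagonal, f p.1 q.1 q.2 =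
      ∑ p ∈ n.divisorsAntidiagonal, ∑ q ∈ p.1.divisorsAntidiagonal, f q.1 q.2 p.2 := by
  simp only [sum_sigma']
  apply sum_nbij' (fun ⟨⟨c, _⟩, ⟨d, s⟩⟩ ↦ ⟨(c * d, s), (c, d)⟩)
    (fun ⟨⟨_, s⟩, ⟨c, d⟩⟩ ↦ ⟨(c, d * s), (d, s)⟩) <;> aesop (add simp mul_assoc)

theorem Nat.mem_divisors_and_mem_divisors_div {n a b : ℕ} :
    a ∈ n.divisors ∧ b ∈ (n / a).divisors ↔ a * b ∣ n ∧ n ≠ 0 := by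
  constructor
  · rintro ⟨ha, hb⟩
    exact ⟨Nat.mul_dvd_of_dvd_div (Nat.dvd_of_mem_divisors ha) (Nat.dvd_of_mem_divisors hb),
      Nat.ne_zero_of_mem_divisors ha⟩
  · rintro ⟨h, hn⟩
    have ha : a ∣ n := (Nat.dvd_mul_right a b).trans h
    refine ⟨Nat.mem_divisors.2 ⟨ha, hn⟩, Nat.mem_divisors.2 ⟨(Nat.dvd_div_iff_mul_dvd ha).2 h, ?_⟩⟩
    exact (Nat.div_ne_zero_iff_of_dvd ha).2 ⟨hn, ne_zero_of_dvd_ne_zero hn ha⟩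

theorem Nat.sum_divisors_sum_divisors_div_comm {M : Type*} [AddCommMonoid M] (n : ℕ)
    (f : ℕ → ℕ → M) :
    ∑ a ∈ n.divisors, ∑ b ∈ (n / a).divisors, f a b =
      ∑ b ∈ n.divisors, ∑ a ∈ (n / b).divisors, f a b :=
  Finset.sum_comm' fun a b => by
    rw [Nat.mem_divisors_and_mem_divisors_div, and_comm (a := a ∈ _),
      Nat.mem_divisors_and_mem_divisors_div, mul_comm]

/-- A partial action of the monoid `(ℕ, *)`: `act d x` is only ever used when `d ∣ key x`. -/
structure DivisorAction (α : Type*) where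
  key : α → ℕ
  act : ℕ → α → α
  act_one : ∀ x, act 1 x = x
  act_act : ∀ c d x, act d (act c x) = act (c * d) x
  key_act : ∀ d x, d ∣ key x → key (act d x) = key x / d

namespace DivisorAction

variable {α : Type*} (A : DivisorAction α)

noncomputable def sum (w : ArithmeticFunction ℂ) (F : ℕ → α → ℂ) (n : ℕ) (x : α) : ℂ :=
  ∑ d ∈ n.divisors, if d ∣ A.key x then w d * F (n / d) (A.act d x) else 0

theorem sum_eq_sum_divisorsAntidiagonal (w : ArithmeticFunction ℂ) (F : ℕ → α → ℂ) (n : ℕ)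
    (x : α) : A.sum w F n x =
      ∑ p ∈ n.divisorsAntidiagonal, if p.1 ∣ A.key x then w p.1 * F p.2 (A.act p.1 x) else 0 :=
  (Nat.sum_divisorsAntidiagonal fun d r => if d ∣ A.key x then w d * F r (A.act d x) else 0).symm

theorem sum_sum (w v : ArithmeticFunction ℂ) (F : ℕ → α → ℂ) :
    A.sum w (A.sum v F) = A.sum (w * v) F := by
  ext n x
  let f c d s := if c * d ∣ A.key x then w c * v d * F s (A.act (c * d) x) else 0
  calc A.sum w (A.sum v F) n x
      = ∑ p ∈ n.divisorsAntidiagonal, ∑ q ∈ p.2.divisorsAntidiagonal, f p.1 q.1 q.2 := by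
        simp only [sum_eq_sum_divisorsAntidiagonal]
        refine sum_congr rfl fun p _ => ?_
        by_cases hc : p.1 ∣ A.key x
        · simp only [if_pos hc, mul_sum, A.key_act _ _ hc, A.act_act, f,
            Nat.dvd_div_iff_mul_dvd hc, mul_ite, mul_zero, mul_assoc]
        · rw [if_neg hc]
          exact (sum_eq_zero fun q _ => if_neg fun h => hc ((Dvd.intro _ rfl).trans h)).symm
    _ = ∑ p ∈ n.divisorsAntidiagonal, ∑ q ∈ p.1.divisorsAntidiagonal, f q.1 q.2 p.2 :=
        Nat.sum_divisorsAntidiagonal_assoc n f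
    _ = A.sum (w * v) F n x := by
        rw [sum_eq_sum_divisorsAntidiagonal]
        refine sum_congr rfl fun p _ => ?_
        simp only [ArithmeticFunction.mul_apply, f]
        split_ifs with h
        · rw [sum_mul]
          refine sum_congr rfl fun q hq => ?_
          rw [(Nat.mem_divisorsAntidiagonal.1 hq).1, if_pos h]
        · exact sum_eq_zero fun q hq => by rw [(Nat.mem_divisorsAntidiagonal.1 hq).1, if_neg h]

theorem sum_one (F : ℕ → α → ℂ) {n : ℕ} (hn : n ≠ 0) (x : α) : A.sum 1 F n x = F n x := by
  rw [sum, sum_eq_single 1]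
  · simp [A.act_one]
  · intro d _ hd
    simp [hd]
  · simp [hn]

def IsInvariant (p : α → Prop) : Prop := ∀ d x, p x → d ∣ A.key x → p (A.act d x)

theorem sum_congr_of_isInvariant {p : α → Prop} (hp : A.IsInvariant p) (w : ArithmeticFunction ℂ)
    {F G : ℕ → α → ℂ} (h : ∀ n ≠ 0, ∀ x, p x → F n x = G n x) (n : ℕ) {x : α} (hx : p x) :
    A.sum w F n x = A.sum w G n x := by
  refine sum_congr rfl fun d hd => ?_
  split_ifs with hdx
  · have hnd : n / d ≠ 0 := (Nat.div_ne_zero_iff_of_dvd (Nat.dvd_of_mem_divisors hd)).2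
      ⟨Nat.ne_zero_of_mem_divisors hd, (Nat.pos_of_mem_divisors hd).ne'⟩
    rw [h _ hnd _ (hp _ _ hx hdx)]
  · rfl

theorem eq_sum_moebius_of_sum_zeta_eq {p : α → Prop} (hp : A.IsInvariant p)
    {F G : ℕ → α → ℂ} (h : ∀ n ≠ 0, ∀ x, p x → A.sum ζ F n x = G n x) :
    ∀ n ≠ 0, ∀ x, p x → F n x = A.sum μ G n x := fun n hn x hx =>
  calc F n x = A.sum (μ * ζ) F n x := by
        rw [ArithmeticFunction.coe_moebius_mul_coe_zeta, A.sum_one F hn]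
    _ = A.sum μ (A.sum ζ F) n x := by rw [A.sum_sum]
    _ = A.sum μ G n x := A.sum_congr_of_isInvariant hp μ h n hx

end DivisorAction

def shiftAction : DivisorAction (ℕ × ℕ) where
  key := Prod.fst
  act d x := (x.1 / d, x.2 * d)
  act_one x := by simp
  act_act c d x := by simp [Nat.div_div_eq_div_mul, mul_assoc]
  key_act _ _ _ := rfl

def dropAction : DivisorAction (ℕ × ℕ) where
  key := Prod.snd
  act d x := (x.1, x.2 / d)
  act_one x := by simp
  act_act c d x := by simp [Nat.div_div_eq_div_mul]
  key_act _ _ _ := rfl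

theorem shiftAction_isInvariant_pos : shiftAction.IsInvariant fun x => 0 < x.1 ∧ 0 < x.2 :=
  fun _ _ hx hd => ⟨Nat.div_pos (Nat.le_of_dvd hx.1 hd) (Nat.pos_of_dvd_of_pos hd hx.1),
    Nat.mul_pos hx.2 (Nat.pos_of_dvd_of_pos hd hx.1)⟩

theorem dropAction_isInvariant_pos : dropAction.IsInvariant fun x => 0 < x.1 ∧ 0 < x.2 :=
  fun _ _ hx hd => ⟨hx.1, Nat.div_pos (Nat.le_of_dvd hx.2 hd) (Nat.pos_of_dvd_of_pos hd hx.2)⟩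

theorem heckeSum_eq_dropAction_sum_shiftAction_sum (B : ℕ → ℕ → ℂ) (n n₂ m : ℕ) :
    heckeSum B n n₂ m =
      dropAction.sum ζ (shiftAction.sum ζ fun a x => B (a * x.1) x.2) n (n₂, m) := by
  have hζ : ∀ {d k : ℕ}, d ∈ k.divisors → (ζ : ArithmeticFunction ℂ) d = 1 := fun hd => by
    rw [ArithmeticFunction.natCoe_apply, ArithmeticFunction.zeta_apply_ne
      (Nat.pos_of_mem_divisors hd).ne', Nat.cast_one]
  rw [heckeSum, Nat.sum_divisors_sum_divisors_div_comm, DivisorAction.sum]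
  refine Finset.sum_congr rfl fun d₂ hd₂ => ?_
  by_cases hm : d₂ ∣ m
  · simp only [DivisorAction.sum, dropAction, shiftAction, hm, and_true, if_true, hζ hd₂, one_mul]
    refine Finset.sum_congr rfl fun d₁ hd₁ => ?_
    by_cases hn₂ : d₁ ∣ n₂
    · simp only [hn₂, if_true, hζ hd₁, one_mul]
      rw [Nat.mul_div_right_comm hn₂, Nat.mul_div_right_comm hm, Nat.div_right_comm n d₂,
        mul_comm (n₂ / d₁)]
    · simp only [hn₂, if_false]
  · simp [dropAction, hm]

theorem shiftAction_sum_dropAction_sum (B : ℕ → ℕ → ℂ) (n₁ n₂ m : ℕ) :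
    shiftAction.sum μ (dropAction.sum μ fun a x => B x.1 x.2 * B a 1) n₁ (n₂, m) =
      ∑ c ∈ n₁.divisors, ∑ b ∈ (n₁ / c).divisors,
        if b ∣ m * c ∧ c ∣ n₂ then
          ((μ b : ℤ) : ℂ) * ((μ c : ℤ) : ℂ) * B (n₂ / c) (m * c / b) * B (n₁ / c / b) 1
        else 0 := by
  simp only [DivisorAction.sum, shiftAction, dropAction, ArithmeticFunction.intCoe_apply]
  refine sum_congr rfl fun c _ => ?_
  by_cases hc : c ∣ n₂
  · simp only [hc, if_true, and_true, mul_sum]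
    refine sum_congr rfl fun b _ => ?_
    by_cases hb : b ∣ m * c
    · simp only [hb, if_true]
      ring
    · simp only [hb, if_false, mul_zero]
  · simp [hc]

theorem hecke_lemma_product_general
    (B : ℕ → ℕ → ℂ)
    (hhecke : ∀ n m₁ m₂ : ℕ, 0 < n → 0 < m₁ → 0 < m₂ →
      B n 1 * B m₁ m₂ = heckeSum B n m₁ m₂) :
    ∀ n₁ n₂ m : ℕ, 0 < n₁ → 0 < n₂ → 0 < m →
      B (n₁ * n₂) m = ∑ c ∈ n₁.divisors, ∑ b ∈ (n₁ / c).divisors,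
        if b ∣ m * c ∧ c ∣ n₂ then
          ((ArithmeticFunction.moebius b : ℤ) : ℂ) * ((ArithmeticFunction.moebius c : ℤ) : ℂ) *
            B (n₂ / c) (m * c / b) * B (n₁ / c / b) 1
        else 0 := by
  intro n₁ n₂ m h₁ h₂ hm
  have hecke : ∀ n ≠ 0, ∀ x : ℕ × ℕ, 0 < x.1 ∧ 0 < x.2 →
      dropAction.sum ζ (shiftAction.sum ζ fun a x => B (a * x.1) x.2) n x = B x.1 x.2 * B n 1 :=
    fun n hn x hx => by
      rw [← heckeSum_eq_dropAction_sum_shiftAction_sum, ← hhecke n _ _ (Nat.pos_of_ne_zero hn)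
        hx.1 hx.2, mul_comm]
  have invert_drop := dropAction.eq_sum_moebius_of_sum_zeta_eq dropAction_isInvariant_pos hecke
  have invert_shift :=
    shiftAction.eq_sum_moebius_of_sum_zeta_eq shiftAction_isInvariant_pos invert_drop
  rw [← shiftAction_sum_dropAction_sum]
  exact invert_shift n₁ h₁.ne' (n₂, m) ⟨h₂, hm⟩

theorem hecke_lemma_product
    (B : ℕ → ℕ → ℂ)
    (h11 : B 1 1 = 1)
    (hmul : ∀ m₁ m₂ m₁' m₂' : ℕ, 0 < m₁ → 0 < m₂ → 0 < m₁' → 0 < m₂' →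
      Nat.Coprime (m₁ * m₂) (m₁' * m₂') →
      B (m₁ * m₁') (m₂ * m₂') = B m₁ m₂ * B m₁' m₂')
    (hhecke : ∀ n m₁ m₂ : ℕ, 0 < n → 0 < m₁ → 0 < m₂ →
      B n 1 * B m₁ m₂ = heckeSum B n m₁ m₂)
    (hdual : ∀ n m₁ m₂ : ℕ, 0 < n → 0 < m₁ → 0 < m₂ →
      B 1 n * B m₁ m₂ = heckeSumDual B n m₁ m₂) :
    ∀ n₁ n₂ m : ℕ, 0 < n₁ → 0 < n₂ → 0 < m →
      B (n₁ * n₂) m = ∑ c ∈ n₁.divisors, ∑ b ∈ (n₁ / c).divisors,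
        if b ∣ m * c ∧ c ∣ n₂ then
          ((ArithmeticFunction.moebius b : ℤ) : ℂ) * ((ArithmeticFunction.moebius c : ℤ) : ℂ) *
            B (n₂ / c) (m * c / b) * B (n₁ / c / b) 1
        else 0 :=
  hecke_lemma_product_general B hhecke
end

section
/- Let q be a prime, let n, r, d be integers with q ∤ d, and let ε, δ ∈ {1, −1}. Define the Kloosterman sum S(a, b; q) = ∑_{x ∈ (ℤ/qℤ)ˣ} e((ax + b·x⁻¹)/q). Then ∑_{α ∈ (ℤ/qℤ)ˣ} S(α⁻¹, εn; q)·e(δ·d·r·α⁻¹/q) = q·[q ∤ r]·e(−ε·δ·n·(dr)⁻¹/q) − q·[q ∣ n] + 1, where inverses are taken modulo q and [·] denotes the indicator of the stated condition. -/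
open scoped BigOperators Real

/-- The additive character `z ↦ e(z/q)` on `ZMod q`. -/
noncomputable def psiMod (q : ℕ) (z : ZMod q) : ℂ :=
  Complex.exp (2 * Real.pi * Complex.I * ((z.val : ℝ) / q))

/-- The Kloosterman sum `S(a, b; q) = ∑_{x ∈ (ℤ/qℤ)ˣ} e((ax + b x⁻¹)/q)` for prime `q`. -/
noncomputable def kloosterman (q : ℕ) [Fact q.Prime] (a b : ZMod q) : ℂ :=
  ∑ x : (ZMod q)ˣ, psiMod q (a * (x : ZMod q) + b * (x : ZMod q)⁻¹)

section aux

variable (q : ℕ) [Fact q.Prime]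

lemma psiMod_eq_stdAddChar (z : ZMod q) : psiMod q z = ZMod.stdAddChar z := by
  have : NeZero q := ⟨(Fact.out : q.Prime).ne_zero⟩
  rw [ZMod.stdAddChar_apply, ZMod.toCircle_apply]
  unfold psiMod
  push_cast
  ring_nf

lemma psiMod_add (a b : ZMod q) : psiMod q (a + b) = psiMod q a * psiMod q b := by
  simp only [psiMod_eq_stdAddChar]
  exact AddChar.map_add_eq_mul _ a b

lemma psiMod_zero : psiMod q (0 : ZMod q) = 1 := by
  simp only [psiMod_eq_stdAddChar]
  exact AddChar.map_zero_eq_one _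

lemma stdAddChar_ne_zero' : (ZMod.stdAddChar : AddChar (ZMod q) ℂ) ≠ 0 := by
  have : NeZero q := ⟨(Fact.out : q.Prime).ne_zero⟩
  intro h
  have h1 : (ZMod.stdAddChar : AddChar (ZMod q) ℂ) (1 : ZMod q)
      = ZMod.stdAddChar (0 : ZMod q) := by rw [h]; simp
  have h2 := ZMod.injective_stdAddChar h1
  have : (1 : ℕ) < q := (Fact.out : q.Prime).one_lt
  exact one_ne_zero h2

lemma psiMod_sum_all : ∑ x : ZMod q, psiMod q x = 0 := by
  have : NeZero q := ⟨(Fact.out : q.Prime).ne_zero⟩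
  simp only [psiMod_eq_stdAddChar]
  exact AddChar.sum_eq_zero_iff_ne_zero.mpr (stdAddChar_ne_zero' q)

lemma sum_units_coe (f : ZMod q → ℂ) :
    ∑ u : (ZMod q)ˣ, f ↑u = ∑ x ∈ Finset.univ.erase (0 : ZMod q), f x := by
  refine Finset.sum_nbij' (fun u => (u : ZMod q))
    (fun x => if h : x = 0 then 1 else Units.mk0 x h) ?_ ?_ ?_ ?_ ?_
  · intro u _
    exact Finset.mem_erase.mpr ⟨u.ne_zero, Finset.mem_univ _⟩
  · intro x _; exact Finset.mem_univ _
  · intro u _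
    have h : (u : ZMod q) ≠ 0 := u.ne_zero
    simp [h]
  · intro x hx
    have h : x ≠ 0 := (Finset.mem_erase.mp hx).1
    simp [h]
  · intro u _; rfl

lemma ramanujan (c : ZMod q) :
    ∑ u : (ZMod q)ˣ, psiMod q (c * u) = if c = 0 then ((q : ℂ) - 1) else -1 := by
  split_ifs with h
  · subst h
    simp only [zero_mul, psiMod_zero, Finset.sum_const, Finset.card_univ, nsmul_eq_mul, mul_one]
    rw [ZMod.card_units_eq_totient, Nat.totient_prime (Fact.out : q.Prime)]
    have hq : 1 ≤ q := (Fact.out : q.Prime).one_lt.le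
    push_cast [Nat.cast_sub hq]
    ring
  · obtain ⟨u0, hu0⟩ := (isUnit_iff_ne_zero.mpr h)
    have key : ∑ u : (ZMod q)ˣ, psiMod q (c * u) = ∑ u : (ZMod q)ˣ, psiMod q ↑u := by
      rw [← hu0]
      exact Fintype.sum_equiv (Equiv.mulLeft u0) _ _ (fun v => by
        simp [Units.val_mul])
    rw [key, sum_units_coe]
    have htot := psiMod_sum_all q
    have hsplit := Finset.add_sum_erase Finset.univ (psiMod q) (Finset.mem_univ (0 : ZMod q))
    rw [htot, psiMod_zero] at hsplit
    linear_combination hsplit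

lemma ramanujan_inv (c : ZMod q) :
    ∑ u : (ZMod q)ˣ, psiMod q (c * (u : ZMod q)⁻¹) = if c = 0 then ((q : ℂ) - 1) else -1 := by
  rw [← ramanujan q c]
  refine Fintype.sum_equiv (Equiv.inv (ZMod q)ˣ) _ _ (fun v => ?_)
  rw [Equiv.inv_apply, Units.val_inv_eq_inv_val]

end aux

theorem opened_kloosterman_eval (q : ℕ) [Fact q.Prime] (n r d : ℤ)
    (hd : ¬ (q : ℤ) ∣ d) (ε δ : ℤ) (hε : ε = 1 ∨ ε = -1) (hδ : δ = 1 ∨ δ = -1) :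
    (∑ α : (ZMod q)ˣ,
        kloosterman q ((α : ZMod q)⁻¹) ((ε * n : ℤ) : ZMod q) *
          psiMod q (((δ * d * r : ℤ) : ZMod q) * (α : ZMod q)⁻¹))
      = (q : ℂ) * (if (q : ℤ) ∣ r then 0 else 1) *
          psiMod q (((-(ε * δ * n) : ℤ) : ZMod q) * (((d * r : ℤ) : ZMod q))⁻¹)
        - (q : ℂ) * (if (q : ℤ) ∣ n then 1 else 0) + 1 := by
  classical
  have hqp : q.Prime := Fact.out
  set c0 : ZMod q := ((δ * d * r : ℤ) : ZMod q) with hc0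
  set b : ZMod q := ((ε * n : ℤ) : ZMod q) with hb
  -- Step 1: open the Kloosterman sum and rearrange
  have step1 : (∑ α : (ZMod q)ˣ,
        kloosterman q ((α : ZMod q)⁻¹) b * psiMod q (c0 * (α : ZMod q)⁻¹))
      = ∑ x : (ZMod q)ˣ, psiMod q (b * (x : ZMod q)⁻¹) *
          ∑ α : (ZMod q)ˣ, psiMod q (((x : ZMod q) + c0) * (α : ZMod q)⁻¹) := by
    unfold kloosterman
    simp_rw [Finset.sum_mul]
    rw [Finset.sum_comm]
    refine Finset.sum_congr rfl (fun x _ => ?_)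
    rw [Finset.mul_sum]
    refine Finset.sum_congr rfl (fun α _ => ?_)
    rw [show ((x : ZMod q) + c0) * (α : ZMod q)⁻¹
        = (α : ZMod q)⁻¹ * (x : ZMod q) + c0 * (α : ZMod q)⁻¹ by ring,
      psiMod_add, psiMod_add]
    ring
  rw [step1]
  simp_rw [ramanujan_inv q]
  -- rewrite the if-condition and split the sum
  have hcond : ∀ x : (ZMod q)ˣ, ((x : ZMod q) + c0 = 0) ↔ ((x : ZMod q) = -c0) := by
    intro x; constructor
    · intro h; linear_combination h
    · intro h; linear_combination h
  have step2 : ∀ x : (ZMod q)ˣ,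
      psiMod q (b * (x : ZMod q)⁻¹) *
        (if (x : ZMod q) + c0 = 0 then ((q : ℂ) - 1) else -1)
      = (if (x : ZMod q) = -c0 then psiMod q (b * (x : ZMod q)⁻¹) * (q : ℂ) else 0)
        - psiMod q (b * (x : ZMod q)⁻¹) := by
    intro x
    rw [if_congr (hcond x) rfl rfl]
    split_ifs with h <;> ring
  simp_rw [step2, Finset.sum_sub_distrib]
  -- the second sum
  have hsum2 : ∑ x : (ZMod q)ˣ, psiMod q (b * (x : ZMod q)⁻¹)
      = if b = 0 then ((q : ℂ) - 1) else -1 := ramanujan_inv q b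
  -- b = 0 iff q ∣ n
  have hbzero : b = 0 ↔ (q : ℤ) ∣ n := by
    rw [hb, ZMod.intCast_zmod_eq_zero_iff_dvd]
    rcases hε with h | h <;> subst h <;> constructor <;> intro hh
    · simpa using hh
    · simpa using hh
    · simpa using (dvd_neg.mp (by simpa using hh))
    · simpa using hh.neg_right
  -- first sum analysis
  by_cases hqr : (q : ℤ) ∣ r
  · -- c0 = 0, no unit equals -c0 = 0
    have hc00 : c0 = 0 := by
      rw [hc0, ZMod.intCast_zmod_eq_zero_iff_dvd]
      exact Dvd.dvd.mul_left hqr _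
    have hfirst : ∑ x : (ZMod q)ˣ,
        (if (x : ZMod q) = -c0 then psiMod q (b * (x : ZMod q)⁻¹) * (q : ℂ) else 0) = 0 := by
      refine Finset.sum_eq_zero (fun x _ => ?_)
      rw [if_neg]
      rw [hc00, neg_zero]
      exact x.ne_zero
    rw [hfirst, hsum2, if_pos hqr, if_congr hbzero rfl rfl]
    split_ifs with hn
    · ring
    · ring
  · -- c0 ≠ 0
    have hc0ne : c0 ≠ 0 := by
      rw [hc0, Ne, ZMod.intCast_zmod_eq_zero_iff_dvd]
      intro hdvd
      have h2 : 2 ≤ q := hqp.two_le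
      have hq2 : ¬ (q : ℤ) ∣ δ := by
        rcases hδ with h | h <;> subst h <;> intro hh
        · have := Int.le_of_dvd one_pos hh; omega
        · rw [dvd_neg] at hh
          have := Int.le_of_dvd one_pos hh; omega
      have hp : Prime (q : ℤ) := Nat.prime_iff_prime_int.mp hqp
      rcases hp.dvd_mul.mp hdvd with hh | hh
      · rcases hp.dvd_mul.mp hh with h1 | h1
        · exact hq2 h1
        · exact hd h1
      · exact hqr hh
    have hnc0 : -c0 ≠ 0 := neg_ne_zero.mpr hc0ne
    set u0 : (ZMod q)ˣ := Units.mk0 (-c0) hnc0 with hu0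
    have hfirst : ∑ x : (ZMod q)ˣ,
        (if (x : ZMod q) = -c0 then psiMod q (b * (x : ZMod q)⁻¹) * (q : ℂ) else 0)
        = psiMod q (b * (-c0)⁻¹) * (q : ℂ) := by
      have : ∀ x : (ZMod q)ˣ, ((x : ZMod q) = -c0) ↔ (x = u0) := by
        intro x
        rw [hu0, Units.ext_iff, Units.val_mk0]
      simp_rw [if_congr (this _) rfl rfl]
      rw [Finset.sum_ite_eq' Finset.univ u0
        (fun x => psiMod q (b * (x : ZMod q)⁻¹) * (q : ℂ)), if_pos (Finset.mem_univ _)]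
      rw [hu0, Units.val_mk0]
    rw [hfirst, hsum2, if_neg hqr]
    have harg : b * (-c0)⁻¹
        = ((-(ε * δ * n) : ℤ) : ZMod q) * (((d * r : ℤ) : ZMod q))⁻¹ := by
      rw [hb, hc0]
      rcases hε with h | h <;> rcases hδ with h' | h' <;> subst h <;> subst h' <;>
        push_cast <;> simp only [inv_neg, neg_neg, one_mul, neg_mul, mul_neg] <;> try ring
    rw [harg, if_congr hbzero rfl rfl]
    split_ifs with hn
    · ring
    · ring
end

section
/- Let y, z be positive integers and F : ℕ → ℂ any function. Then ∑_{x ∣ yz} F(x) = ∑_{x₁ ∣ y} ∑_{x₂ ∣ z, gcd(x₂, y/x₁) = 1} F(x₁·x₂). -/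
open scoped BigOperators

theorem divisor_sum_split (y z : ℕ) (hy : 0 < y) (hz : 0 < z) (F : ℕ → ℂ) :
    (∑ x ∈ (y * z).divisors, F x)
      = ∑ x₁ ∈ y.divisors, ∑ x₂ ∈ z.divisors,
          if Nat.Coprime x₂ (y / x₁) then F (x₁ * x₂) else 0 := by
  have hyz : y * z ≠ 0 := Nat.mul_ne_zero hy.ne' hz.ne'
  rw [← Finset.sum_product']
  rw [← Finset.sum_filter]
  refine Finset.sum_nbij' (fun x => (Nat.gcd x y, x / Nat.gcd x y))
    (fun p => p.1 * p.2) ?_ ?_ ?_ ?_ ?_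
  · intro x hx
    rw [Nat.mem_divisors] at hx
    obtain ⟨hxd, _⟩ := hx
    have hx0 : x ≠ 0 := by
      rintro rfl
      exact hyz (Nat.eq_zero_of_zero_dvd hxd)
    have hd0 : Nat.gcd x y ≠ 0 := Nat.gcd_ne_zero_left hx0
    have hdy : Nat.gcd x y ∣ y := Nat.gcd_dvd_right x y
    have hcop : Nat.Coprime (x / Nat.gcd x y) (y / Nat.gcd x y) :=
      Nat.coprime_div_gcd_div_gcd (Nat.pos_of_ne_zero hd0)
    have hx2z : x / Nat.gcd x y ∣ z := by
      have hxe : Nat.gcd x y * (x / Nat.gcd x y) = x :=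
        Nat.mul_div_cancel' (Nat.gcd_dvd_left x y)
      have hye : Nat.gcd x y * (y / Nat.gcd x y) = y :=
        Nat.mul_div_cancel' hdy
      have h1 : Nat.gcd x y * (x / Nat.gcd x y) ∣
          Nat.gcd x y * ((y / Nat.gcd x y) * z) := by
        rw [hxe, ← mul_assoc, hye]; exact hxd
      have h2 : x / Nat.gcd x y ∣ (y / Nat.gcd x y) * z :=
        (mul_dvd_mul_iff_left hd0).mp h1
      exact hcop.dvd_of_dvd_mul_left h2
    simp only [Finset.mem_filter, Finset.mem_product, Nat.mem_divisors]
    exact ⟨⟨⟨hdy, hy.ne'⟩, ⟨hx2z, hz.ne'⟩⟩, hcop⟩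
  · intro p hp
    simp only [Finset.mem_filter, Finset.mem_product, Nat.mem_divisors] at hp
    exact Nat.mem_divisors.mpr ⟨mul_dvd_mul hp.1.1.1 hp.1.2.1, hyz⟩
  · intro x hx
    rw [Nat.mem_divisors] at hx
    exact Nat.mul_div_cancel' (Nat.gcd_dvd_left x y)
  · intro p hp
    simp only [Finset.mem_filter, Finset.mem_product, Nat.mem_divisors] at hp
    obtain ⟨⟨⟨h1y, _⟩, ⟨h2z, _⟩⟩, hcop⟩ := hp
    have h10 : p.1 ≠ 0 := by
      rintro h
      exact hy.ne' (Nat.eq_zero_of_zero_dvd (h ▸ h1y))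
    have hg : Nat.gcd (p.1 * p.2) y = p.1 := by
      conv_lhs => rw [← Nat.mul_div_cancel' h1y]
      rw [Nat.gcd_mul_left, hcop, mul_one]
    ext
    · simp [hg]
    · simp only [hg]
      exact Nat.mul_div_cancel_left _ (Nat.pos_of_ne_zero h10)
  · intro x hx
    simp only [Nat.div_mul_cancel (Nat.gcd_dvd_left x y),
      Nat.mul_div_cancel' (Nat.gcd_dvd_left x y)]
end
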